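/- arXiv:1807.06733 — 2 statements merged into one kernel-verified Lean document; each statement's English description precedes it below -/
import Mathlib

section
/- Let C be a triangulated category with split idempotents and X a full additive subcategory of C. Assume: (a) every object A of C admits a distinguished triangle Σ⁻¹A → X₀ → X₁ →f A with X₀, X₁ ∈ X and f a right X-approximation of A, and a distinguished triangle A →g X'₁ → X'₂ → ΣA with X'₁, X'₂ ∈ X and g a left X-approximation of A; and (b) for every distinguished triangle A₀ →f₀ A₁ →f₁ A₂ →f₂ ΣA₀ in C, if f̄₁ is an epimorphism in C/X then f₀ is X-monic, and if f̄₀ is a monomorphism in C/X then f₁ is X-epic. Then the additive quotient category C/X is an abelian category. -/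
open CategoryTheory CategoryTheory.Limits CategoryTheory.Pretriangulated

universe v u

variable {C : Type u} [Category.{v} C] [Preadditive C] [HasZeroObject C]
  [HasShift C ℤ] [∀ n : ℤ, (shiftFunctor C n).Additive] [Pretriangulated C]

/-- `f` factors through an object satisfying `X`. -/
def FactorsThru (X : C → Prop) {A B : C} (f : A ⟶ B) : Prop :=
  ∃ (X₀ : C) (g : A ⟶ X₀) (h : X₀ ⟶ B), X X₀ ∧ g ≫ h = f

/-- The hom relation on `C` identifying two morphisms when their difference factors
through an object of `X`; the quotient category `C/X` is the quotient by this relation. -/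
def homRelOf (X : C → Prop) : HomRel C :=
  fun {A B : C} (f g : A ⟶ B) => FactorsThru X (f - g)

/-- The additive quotient category `C/X`. -/
abbrev QuotCat (X : C → Prop) := CategoryTheory.Quotient (homRelOf X)

/-- The quotient functor `C ⥤ C/X`, sending a morphism `f` to its class `f̄`. -/
abbrev quotFunctor (X : C → Prop) : C ⥤ QuotCat X := Quotient.functor _

/-- `X` is a full additive subcategory: it contains the zero objects and is closed under
isomorphisms, finite direct sums and direct summands. -/
structure IsAdditiveClosed (X : C → Prop) : Prop where
  zero : ∀ Z : C, IsZero Z → X Z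
  iso : ∀ {A B : C}, (A ≅ B) → X A → X B
  biprod : ∀ {A B : C} (b : BinaryBicone A B), Nonempty b.IsBilimit → X A → X B → X b.pt
  summand : ∀ {A B : C} (i : A ⟶ B) (p : B ⟶ A), i ≫ p = 𝟙 A → X B → X A

/-- `X` is a cluster-tilting subcategory of the triangulated category `C`:
it is a full additive subcategory such that (i) `Hom(X₁, ΣX₂) = 0` for all `X₁, X₂ ∈ X`, and
(ii) every object `A` fits into a distinguished triangle `X₀ ⟶ X₁ ⟶ A ⟶ ΣX₀` with
`X₀, X₁ ∈ X`. -/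
structure IsClusterTilting (X : C → Prop) extends IsAdditiveClosed X : Prop where
  hom_shift_zero : ∀ {X₁ X₂ : C}, X X₁ → X X₂ → ∀ f : X₁ ⟶ X₂⟦(1 : ℤ)⟧, f = 0
  exists_triangle : ∀ A : C, ∃ (X₀ X₁ : C) (f : X₀ ⟶ X₁) (g : X₁ ⟶ A) (h : A ⟶ X₀⟦(1 : ℤ)⟧),
    X X₀ ∧ X X₁ ∧ Triangle.mk f g h ∈ distTriang C

/-- `f : A ⟶ B` is `X`-monic: every morphism from `A` to an object of `X` factors through `f`. -/
def XMonic (X : C → Prop) {A B : C} (f : A ⟶ B) : Prop :=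
  ∀ X' : C, X X' → ∀ u : A ⟶ X', ∃ v : B ⟶ X', f ≫ v = u

/-- `f : A ⟶ B` is `X`-epic: every morphism from an object of `X` to `B` factors through `f`. -/
def XEpic (X : C → Prop) {A B : C} (f : A ⟶ B) : Prop :=
  ∀ X' : C, X X' → ∀ u : X' ⟶ B, ∃ v : X' ⟶ A, v ≫ f = u

set_option linter.unusedSectionVars false

/-!
Morphisms factoring through `X` form an ideal, so `C/X` is preadditive with finite products.
For a distinguished triangle `A₀ ⟶ A₁ ⟶ A₂ ⟶ ΣA₀` with `A₀ ⟶ A₁` `X`-monic, `Ā₁ ⟶ Ā₂` is a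
cokernel of `Ā₀ ⟶ Ā₁` in `C/X`: the factorization comes from exactness of `Hom(-, W)` on the
triangle, and `Ā₁ ⟶ Ā₂` is epi because a right `X`-approximation triangle of `W` detects when a
morphism `A₂ ⟶ W` factors through `X`. Up to the isomorphism `B ≅ B ⊞ X₁'` in `C/X`, any `f̄`
is the class of the `X`-monic morphism `(f, g) : A ⟶ B ⊞ X₁'` with `g` a left
`X`-approximation, so cokernels exist; by (b) every epimorphism of `C/X` is the second morphism
of such a triangle, hence normal. Kernels and monomorphisms are dual.
-/

lemma exists_eq_mor₁_comp_of_mor₃_comp_shift_eq_zero (T : Triangle C) (hT : T ∈ distTriang C)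
    {Z : C} (f : T.obj₁ ⟶ Z) (hf : T.mor₃ ≫ f⟦(1 : ℤ)⟧' = 0) :
    ∃ g : T.obj₂ ⟶ Z, f = T.mor₁ ≫ g := by
  obtain ⟨g, hg⟩ : ∃ g : T.obj₂⟦(1 : ℤ)⟧ ⟶ Z⟦(1 : ℤ)⟧, f⟦1⟧' = (-T.mor₁⟦1⟧') ≫ g :=
    Triangle.yoneda_exact₃ _ (rot_of_distTriang _ hT) _ hf
  refine ⟨-(shiftFunctor C (1 : ℤ)).preimage g, (shiftFunctor C (1 : ℤ)).map_injective ?_⟩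
  rw [hg, Functor.map_comp, Functor.map_neg, Functor.map_preimage, Preadditive.neg_comp,
    Preadditive.comp_neg]

lemma map_mor₁_comp_map_mor₂ {D : Type*} [Category D] [HasZeroMorphisms D] (F : C ⥤ D)
    [F.PreservesZeroMorphisms] {T : Triangle C} (hT : T ∈ distTriang C) :
    F.map T.mor₁ ≫ F.map T.mor₂ = 0 := by
  rw [← F.map_comp, comp_distTriang_mor_zero₁₂ _ hT, F.map_zero]

def HasRightApproximationTriangles (X : C → Prop) : Prop :=
  ∀ A : C, ∃ (X₀ X₁ : C) (u : X₀ ⟶ X₁) (f : X₁ ⟶ A) (h : A ⟶ X₀⟦(1 : ℤ)⟧),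
    X X₀ ∧ X X₁ ∧ XEpic X f ∧ Triangle.mk u f h ∈ distTriang C

def HasLeftApproximationTriangles (X : C → Prop) : Prop :=
  ∀ A : C, ∃ (X₁ X₂ : C) (g : A ⟶ X₁) (v : X₁ ⟶ X₂) (h : X₂ ⟶ A⟦(1 : ℤ)⟧),
    X X₁ ∧ X X₂ ∧ XMonic X g ∧ Triangle.mk g v h ∈ distTriang C

section Ideal

variable {X : C → Prop}

lemma IsAdditiveClosed.factorsThru_zero (hX : IsAdditiveClosed X) (A B : C) :
    FactorsThru X (0 : A ⟶ B) := by
  obtain ⟨Z, hZ⟩ := HasZeroObject.zero (C := C)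
  exact ⟨Z, 0, 0, hX.zero Z hZ, comp_zero⟩

lemma FactorsThru.add (hX : IsAdditiveClosed X) {A B : C} {f g : A ⟶ B}
    (hf : FactorsThru X f) (hg : FactorsThru X g) : FactorsThru X (f + g) := by
  obtain ⟨U, p, q, hU, rfl⟩ := hf
  obtain ⟨V, p', q', hV, rfl⟩ := hg
  refine ⟨U ⊞ V, biprod.lift p p', biprod.desc q q', ?_, biprod.lift_desc⟩
  exact hX.biprod (BinaryBiproduct.bicone U V) ⟨BinaryBiproduct.isBilimit U V⟩ hU hV

lemma FactorsThru.neg {A B : C} {f : A ⟶ B} (hf : FactorsThru X f) : FactorsThru X (-f) := by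
  obtain ⟨U, p, q, hU, rfl⟩ := hf
  exact ⟨U, -p, q, hU, Preadditive.neg_comp _ _⟩

lemma FactorsThru.precomp {A B D : C} (f : A ⟶ B) {g : B ⟶ D} (hg : FactorsThru X g) :
    FactorsThru X (f ≫ g) := by
  obtain ⟨U, p, q, hU, rfl⟩ := hg
  exact ⟨U, f ≫ p, q, hU, Category.assoc _ _ _⟩

lemma FactorsThru.postcomp {A B D : C} {f : A ⟶ B} (hf : FactorsThru X f) (g : B ⟶ D) :
    FactorsThru X (f ≫ g) := by
  obtain ⟨U, p, q, hU, rfl⟩ := hf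
  exact ⟨U, p, q ≫ g, hU, (Category.assoc _ _ _).symm⟩

lemma IsAdditiveClosed.congruence (hX : IsAdditiveClosed X) : Congruence (homRelOf X) where
  equivalence :=
    { refl := fun f => by simpa [homRelOf] using hX.factorsThru_zero _ _
      symm := fun h => by simpa [homRelOf] using h.neg
      trans := fun h₁ h₂ => by simpa [homRelOf] using h₁.add hX h₂ }
  comp_left := fun f _ _ h => by simpa [homRelOf, Preadditive.comp_sub] using h.precomp f
  comp_right := fun g h => by simpa [homRelOf, Preadditive.sub_comp] using h.postcomp g

lemma IsAdditiveClosed.homRelOf_add (hX : IsAdditiveClosed X) ⦃A B : C⦄ (f₁ f₂ g₁ g₂ : A ⟶ B)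
    (hf : homRelOf X f₁ f₂) (hg : homRelOf X g₁ g₂) : homRelOf X (f₁ + g₁) (f₂ + g₂) := by
  simpa [homRelOf, add_sub_add_comm] using hf.add hX hg

lemma exists_factorsThru_sub_mor₂_comp {T : Triangle C} (hT : T ∈ distTriang C)
    (hmon : XMonic X T.mor₁) {W : C} (u : T.obj₂ ⟶ W) (hu : FactorsThru X (T.mor₁ ≫ u)) :
    ∃ t : T.obj₃ ⟶ W, FactorsThru X (u - T.mor₂ ≫ t) := by
  obtain ⟨U, p, q, hU, hpq⟩ := hu
  obtain ⟨p', rfl⟩ := hmon U hU p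
  obtain ⟨t, ht⟩ := Triangle.yoneda_exact₂ T hT (u - p' ≫ q)
    (by rw [Preadditive.comp_sub, ← Category.assoc, hpq, sub_self])
  exact ⟨t, U, p', q, hU, by rw [← ht, sub_sub_cancel]⟩

lemma exists_factorsThru_sub_comp_mor₁ {T : Triangle C} (hT : T ∈ distTriang C)
    (hepi : XEpic X T.mor₂) {W : C} (u : W ⟶ T.obj₂) (hu : FactorsThru X (u ≫ T.mor₂)) :
    ∃ t : W ⟶ T.obj₁, FactorsThru X (u - t ≫ T.mor₁) := by
  obtain ⟨U, p, q, hU, hpq⟩ := hu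
  obtain ⟨q', rfl⟩ := hepi U hU q
  obtain ⟨t, ht⟩ := Triangle.coyoneda_exact₂ T hT (u - p ≫ q')
    (by rw [Preadditive.sub_comp, Category.assoc, hpq, sub_self])
  exact ⟨t, U, p, q', hU, by rw [← ht, sub_sub_cancel]⟩

lemma HasRightApproximationTriangles.factorsThru_of_factorsThru_mor₂_comp
    (hR : HasRightApproximationTriangles X) {T : Triangle C} (hT : T ∈ distTriang C)
    (hmon : XMonic X T.mor₁) {W : C} (s : T.obj₃ ⟶ W) (hs : FactorsThru X (T.mor₂ ≫ s)) :
    FactorsThru X s := by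
  obtain ⟨U, a, b, hU, hab⟩ := hs
  obtain ⟨Y₀, Y₁, u, r, θ, hY₀, hY₁, hr, hTr⟩ := hR W
  obtain ⟨b', rfl⟩ := hr U hU b
  have hrθ : r ≫ θ = 0 := comp_distTriang_mor_zero₂₃ _ hTr
  obtain ⟨g, hg⟩ := Triangle.yoneda_exact₃ T hT (s ≫ θ) (by
    rw [← Category.assoc, ← hab, Category.assoc, Category.assoc, hrθ, comp_zero, comp_zero])
  obtain ⟨g', hg'⟩ := hmon Y₀ hY₀ ((shiftFunctor C (1 : ℤ)).preimage g)
  have hsθ : s ≫ θ = 0 := by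
    rw [hg, ← (shiftFunctor C (1 : ℤ)).map_preimage g, ← hg', Functor.map_comp,
      ← Category.assoc, comp_distTriang_mor_zero₃₁ _ hT, zero_comp]
  obtain ⟨w, hw⟩ := Triangle.coyoneda_exact₃ _ hTr s hsθ
  exact ⟨Y₁, w, r, hY₁, hw.symm⟩

lemma HasLeftApproximationTriangles.factorsThru_of_factorsThru_comp_mor₁
    (hL : HasLeftApproximationTriangles X) {T : Triangle C} (hT : T ∈ distTriang C)
    (hepi : XEpic X T.mor₂) {W : C} (s : W ⟶ T.obj₁) (hs : FactorsThru X (s ≫ T.mor₁)) :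
    FactorsThru X s := by
  obtain ⟨U, a, b, hU, hab⟩ := hs
  obtain ⟨Y₁, Y₂, l, v, w, hY₁, hY₂, hl, hTl⟩ := hL W
  obtain ⟨a', rfl⟩ := hl U hU a
  have hwl : w ≫ l⟦(1 : ℤ)⟧' = 0 := comp_distTriang_mor_zero₃₁ _ hTl
  obtain ⟨g, hg⟩ := Triangle.coyoneda_exact₁ T hT (w ≫ s⟦(1 : ℤ)⟧') (by
    rw [Category.assoc, ← Functor.map_comp, ← hab, Category.assoc, Functor.map_comp,
      ← Category.assoc, hwl, zero_comp])
  obtain ⟨g', rfl⟩ := hepi Y₂ hY₂ g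
  have hws : w ≫ s⟦(1 : ℤ)⟧' = 0 := by
    rw [hg, Category.assoc, comp_distTriang_mor_zero₂₃ _ hT, comp_zero]
  obtain ⟨t, ht⟩ := exists_eq_mor₁_comp_of_mor₃_comp_shift_eq_zero _ hTl s hws
  exact ⟨Y₁, l, t, hY₁, ht.symm⟩

end Ideal

section Quotient

variable {X : C → Prop} [Congruence (homRelOf X)] [Preadditive (QuotCat X)]
  [(quotFunctor X).Additive]

lemma quotFunctor_map_eq_zero_iff {A B : C} (f : A ⟶ B) :
    (quotFunctor X).map f = 0 ↔ FactorsThru X f := by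
  rw [← (quotFunctor X).map_zero, Quotient.functor_map_eq_iff, homRelOf, sub_zero]

lemma isZero_quotFunctor_obj {Y : C} (hY : X Y) : IsZero ((quotFunctor X).obj Y) := by
  rw [IsZero.iff_id_eq_zero, ← (quotFunctor X).map_id, quotFunctor_map_eq_zero_iff]
  exact ⟨Y, 𝟙 Y, 𝟙 Y, hY, Category.id_comp _⟩

lemma epi_quotFunctor_map {A B : C} (f : A ⟶ B)
    (hf : ∀ ⦃W : C⦄ (s : B ⟶ W), FactorsThru X (f ≫ s) → FactorsThru X s) :
    Epi ((quotFunctor X).map f) := by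
  refine Preadditive.epi_of_cancel_zero _ fun {W} g hg => ?_
  obtain ⟨s, rfl⟩ := (quotFunctor X).map_surjective g
  rw [← Functor.map_comp, quotFunctor_map_eq_zero_iff] at hg
  exact (quotFunctor_map_eq_zero_iff s).2 (hf s hg)

lemma mono_quotFunctor_map {A B : C} (f : A ⟶ B)
    (hf : ∀ ⦃W : C⦄ (s : W ⟶ A), FactorsThru X (s ≫ f) → FactorsThru X s) :
    Mono ((quotFunctor X).map f) := by
  refine Preadditive.mono_of_cancel_zero _ fun {W} g hg => ?_
  obtain ⟨s, rfl⟩ := (quotFunctor X).map_surjective g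
  rw [← Functor.map_comp, quotFunctor_map_eq_zero_iff] at hg
  exact (quotFunctor_map_eq_zero_iff s).2 (hf s hg)

lemma HasRightApproximationTriangles.epi_quotFunctor_map_mor₂
    (hR : HasRightApproximationTriangles X) {T : Triangle C} (hT : T ∈ distTriang C)
    (hmon : XMonic X T.mor₁) : Epi ((quotFunctor X).map T.mor₂) :=
  epi_quotFunctor_map _ fun _ s => hR.factorsThru_of_factorsThru_mor₂_comp hT hmon s

lemma HasLeftApproximationTriangles.mono_quotFunctor_map_mor₁
    (hL : HasLeftApproximationTriangles X) {T : Triangle C} (hT : T ∈ distTriang C)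
    (hepi : XEpic X T.mor₂) : Mono ((quotFunctor X).map T.mor₁) :=
  mono_quotFunctor_map _ fun _ s => hL.factorsThru_of_factorsThru_comp_mor₁ hT hepi s

lemma exists_quotFunctor_map_mor₂_comp_eq {T : Triangle C} (hT : T ∈ distTriang C)
    (hmon : XMonic X T.mor₁) {W : QuotCat X} (k : (quotFunctor X).obj T.obj₂ ⟶ W)
    (hk : (quotFunctor X).map T.mor₁ ≫ k = 0) :
    ∃ d : (quotFunctor X).obj T.obj₃ ⟶ W, (quotFunctor X).map T.mor₂ ≫ d = k := by
  obtain ⟨u, rfl⟩ := (quotFunctor X).map_surjective k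
  rw [← Functor.map_comp, quotFunctor_map_eq_zero_iff] at hk
  obtain ⟨t, ht⟩ := exists_factorsThru_sub_mor₂_comp hT hmon u hk
  exact ⟨(quotFunctor X).map t, by
    rw [← Functor.map_comp]; exact ((Quotient.functor_map_eq_iff _ _ _).2 ht).symm⟩

lemma exists_comp_quotFunctor_map_mor₁_eq {T : Triangle C} (hT : T ∈ distTriang C)
    (hepi : XEpic X T.mor₂) {W : QuotCat X} (k : W ⟶ (quotFunctor X).obj T.obj₂)
    (hk : k ≫ (quotFunctor X).map T.mor₂ = 0) :
    ∃ d : W ⟶ (quotFunctor X).obj T.obj₁, d ≫ (quotFunctor X).map T.mor₁ = k := by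
  obtain ⟨u, rfl⟩ := (quotFunctor X).map_surjective k
  rw [← Functor.map_comp, quotFunctor_map_eq_zero_iff] at hk
  obtain ⟨t, ht⟩ := exists_factorsThru_sub_comp_mor₁ hT hepi u hk
  exact ⟨(quotFunctor X).map t, by
    rw [← Functor.map_comp]; exact ((Quotient.functor_map_eq_iff _ _ _).2 ht).symm⟩

noncomputable def isColimitCokernelCoforkOfXMonic {T : Triangle C} (hT : T ∈ distTriang C)
    (hmon : XMonic X T.mor₁) [Epi ((quotFunctor X).map T.mor₂)] :
    IsColimit (CokernelCofork.ofπ _ (map_mor₁_comp_map_mor₂ (quotFunctor X) hT)) :=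
  CokernelCofork.IsColimit.ofπ' _ _ fun k hk =>
    ⟨_, (exists_quotFunctor_map_mor₂_comp_eq hT hmon k hk).choose_spec⟩

noncomputable def isLimitKernelForkOfXEpic {T : Triangle C} (hT : T ∈ distTriang C)
    (hepi : XEpic X T.mor₂) [Mono ((quotFunctor X).map T.mor₁)] :
    IsLimit (KernelFork.ofι _ (map_mor₁_comp_map_mor₂ (quotFunctor X) hT)) :=
  KernelFork.IsLimit.ofι' _ _ fun k hk =>
    ⟨_, (exists_comp_quotFunctor_map_mor₁_eq hT hepi k hk).choose_spec⟩

noncomputable def quotFunctorObjIsoBiprod (B : C) {Y : C} (hY : X Y) :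
    (quotFunctor X).obj B ≅ (quotFunctor X).obj (B ⊞ Y) where
  hom := (quotFunctor X).map biprod.inl
  inv := (quotFunctor X).map biprod.fst
  hom_inv_id := by rw [← Functor.map_comp, biprod.inl_fst, (quotFunctor X).map_id]
  inv_hom_id := by
    rw [← Functor.map_comp, eq_sub_of_add_eq biprod.total, Functor.map_sub, (quotFunctor X).map_id,
      Functor.map_comp, (isZero_quotFunctor_obj hY).eq_of_tgt ((quotFunctor X).map biprod.snd) 0,
      zero_comp, sub_zero]

lemma quotFunctor_map_biprod_lift {A B Y : C} (f : A ⟶ B) (g : A ⟶ Y) (hY : X Y) :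
    (quotFunctor X).map (biprod.lift f g) =
      (quotFunctor X).map f ≫ (quotFunctorObjIsoBiprod B hY).hom := by
  rw [biprod.lift_eq, Functor.map_add, Functor.map_comp, Functor.map_comp,
    (isZero_quotFunctor_obj hY).eq_of_tgt ((quotFunctor X).map g) 0, zero_comp, add_zero]
  rfl

lemma quotFunctor_map_biprod_desc {A B Y : C} (f : A ⟶ B) (r : Y ⟶ B) (hY : X Y) :
    (quotFunctor X).map (biprod.desc f r) =
      (quotFunctorObjIsoBiprod A hY).inv ≫ (quotFunctor X).map f := by
  rw [biprod.desc_eq, Functor.map_add, Functor.map_comp, Functor.map_comp,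
    (isZero_quotFunctor_obj hY).eq_of_tgt ((quotFunctor X).map biprod.snd) 0, zero_comp, add_zero]
  rfl

lemma hasCokernel_quotFunctor_map (hL : HasLeftApproximationTriangles X)
    (hR : HasRightApproximationTriangles X) {A B : C} (f : A ⟶ B) :
    HasCokernel ((quotFunctor X).map f) := by
  obtain ⟨Y, -, g, -, -, hY, -, hg, -⟩ := hL A
  have hmon : XMonic X (biprod.lift f g) := fun U hU u => by
    obtain ⟨w, rfl⟩ := hg U hU u
    exact ⟨biprod.snd ≫ w, by rw [← Category.assoc, biprod.lift_snd]⟩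
  obtain ⟨D, m, δ, hT⟩ := distinguished_cocone_triangle (biprod.lift f g)
  have := hR.epi_quotFunctor_map_mor₂ hT hmon
  have : HasCokernel ((quotFunctor X).map (biprod.lift f g)) :=
    HasColimit.mk ⟨_, isColimitCokernelCoforkOfXMonic hT hmon⟩
  have h := hasCokernel_comp_iso ((quotFunctor X).map (biprod.lift f g))
    (quotFunctorObjIsoBiprod B hY).inv
  rwa [quotFunctor_map_biprod_lift f g hY, Category.assoc, Iso.hom_inv_id,
    Category.comp_id] at h

lemma hasKernel_quotFunctor_map (hL : HasLeftApproximationTriangles X)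
    (hR : HasRightApproximationTriangles X) {A B : C} (f : A ⟶ B) :
    HasKernel ((quotFunctor X).map f) := by
  obtain ⟨-, Y, -, r, -, -, hY, hr, -⟩ := hR B
  have hepi : XEpic X (biprod.desc f r) := fun U hU u => by
    obtain ⟨w, rfl⟩ := hr U hU u
    exact ⟨w ≫ biprod.inr, by rw [Category.assoc, biprod.inr_desc]⟩
  obtain ⟨E, k, δ, hT⟩ := distinguished_cocone_triangle₁ (biprod.desc f r)
  have := hL.mono_quotFunctor_map_mor₁ hT hepi
  have : HasKernel ((quotFunctor X).map (biprod.desc f r)) :=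
    HasLimit.mk ⟨_, isLimitKernelForkOfXEpic hT hepi⟩
  have h := hasKernel_iso_comp (quotFunctorObjIsoBiprod A hY).hom
    ((quotFunctor X).map (biprod.desc f r))
  rwa [quotFunctor_map_biprod_desc f r hY, Iso.hom_inv_id_assoc] at h

lemma hasCokernels_quotCat (hL : HasLeftApproximationTriangles X)
    (hR : HasRightApproximationTriangles X) : HasCokernels (QuotCat X) where
  has_colimit φ := by
    obtain ⟨f, rfl⟩ := (quotFunctor X).map_surjective φ
    exact hasCokernel_quotFunctor_map hL hR f

lemma hasKernels_quotCat (hL : HasLeftApproximationTriangles X)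
    (hR : HasRightApproximationTriangles X) : HasKernels (QuotCat X) where
  has_limit φ := by
    obtain ⟨f, rfl⟩ := (quotFunctor X).map_surjective φ
    exact hasKernel_quotFunctor_map hL hR f

lemma isNormalEpiCategory_quotCat
    (hb : ∀ T ∈ distTriang C, Epi ((quotFunctor X).map T.mor₂) → XMonic X T.mor₁) :
    IsNormalEpiCategory (QuotCat X) where
  normalEpiOfEpi φ _ := by
    obtain ⟨f, rfl⟩ := (quotFunctor X).map_surjective φ
    obtain ⟨E, z, δ, hT⟩ := distinguished_cocone_triangle₁ f
    have : Epi ((quotFunctor X).map (Triangle.mk z f δ).mor₂) := ‹_›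
    exact ⟨⟨_, _, _, isColimitCokernelCoforkOfXMonic hT (hb _ hT ‹_›)⟩⟩

lemma isNormalMonoCategory_quotCat
    (hb : ∀ T ∈ distTriang C, Mono ((quotFunctor X).map T.mor₁) → XEpic X T.mor₂) :
    IsNormalMonoCategory (QuotCat X) where
  normalMonoOfMono φ _ := by
    obtain ⟨f, rfl⟩ := (quotFunctor X).map_surjective φ
    obtain ⟨D, g, δ, hT⟩ := distinguished_cocone_triangle f
    have : Mono ((quotFunctor X).map (Triangle.mk f g δ).mor₁) := ‹_›
    exact ⟨⟨_, _, _, isLimitKernelForkOfXEpic hT (hb _ hT ‹_›)⟩⟩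

end Quotient

theorem quotient_is_abelian_of_conditions_general
    (X : C → Prop) (hX : IsAdditiveClosed X)
    (ha : ∀ A : C,
      (∃ (X₀ X₁ : C) (u : X₀ ⟶ X₁) (f : X₁ ⟶ A) (h : A ⟶ X₀⟦(1 : ℤ)⟧),
        X X₀ ∧ X X₁ ∧ XEpic X f ∧ Triangle.mk u f h ∈ distTriang C) ∧
      (∃ (X₁' X₂' : C) (g : A ⟶ X₁') (v : X₁' ⟶ X₂') (h : X₂' ⟶ A⟦(1 : ℤ)⟧),
        X X₁' ∧ X X₂' ∧ XMonic X g ∧ Triangle.mk g v h ∈ distTriang C))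
    (hb : ∀ (A₀ A₁ A₂ : C) (f₀ : A₀ ⟶ A₁) (f₁ : A₁ ⟶ A₂) (f₂ : A₂ ⟶ A₀⟦(1 : ℤ)⟧),
      (Triangle.mk f₀ f₁ f₂ ∈ distTriang C) →
        (Epi ((quotFunctor X).map f₁) → XMonic X f₀) ∧
        (Mono ((quotFunctor X).map f₀) → XEpic X f₁)) :
    Nonempty (Abelian (QuotCat X)) := by
  have hR : HasRightApproximationTriangles X := fun A => (ha A).1
  have hL : HasLeftApproximationTriangles X := fun A => (ha A).2
  have := hX.congruence
  let := Quotient.preadditive _ hX.homRelOf_add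
  have := Quotient.functor_additive _ hX.homRelOf_add
  have := (quotFunctor X).hasFiniteProducts_of_additive_of_essSurj
  have := hasKernels_quotCat hL hR
  have := hasCokernels_quotCat hL hR
  exact ⟨{ toIsNormalMonoCategory := isNormalMonoCategory_quotCat fun T hT => (hb _ _ _ _ _ _ hT).2
           toIsNormalEpiCategory := isNormalEpiCategory_quotCat fun T hT => (hb _ _ _ _ _ _ hT).1 }⟩

/-- If every object admits suitable approximation triangles with respect to a
full additive subcategory `X` (condition (a)), and condition (b) relating epis/monos in `C/X`
with `X`-monic/`X`-epic morphisms holds, then `C/X` is abelian. -/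
theorem quotient_is_abelian_of_conditions [IsIdempotentComplete C]
    (X : C → Prop) (hX : IsAdditiveClosed X)
    (ha : ∀ A : C,
      (∃ (X₀ X₁ : C) (u : X₀ ⟶ X₁) (f : X₁ ⟶ A) (h : A ⟶ X₀⟦(1 : ℤ)⟧),
        X X₀ ∧ X X₁ ∧ XEpic X f ∧ Triangle.mk u f h ∈ distTriang C) ∧
      (∃ (X₁' X₂' : C) (g : A ⟶ X₁') (v : X₁' ⟶ X₂') (h : X₂' ⟶ A⟦(1 : ℤ)⟧),
        X X₁' ∧ X X₂' ∧ XMonic X g ∧ Triangle.mk g v h ∈ distTriang C))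
    (hb : ∀ (A₀ A₁ A₂ : C) (f₀ : A₀ ⟶ A₁) (f₁ : A₁ ⟶ A₂) (f₂ : A₂ ⟶ A₀⟦(1 : ℤ)⟧),
      (Triangle.mk f₀ f₁ f₂ ∈ distTriang C) →
        (Epi ((quotFunctor X).map f₁) → XMonic X f₀) ∧
        (Mono ((quotFunctor X).map f₀) → XEpic X f₁)) :
    Nonempty (Abelian (QuotCat X)) :=
  quotient_is_abelian_of_conditions_general X hX ha hb
end

section
/- Let X be a cluster-tilting subcategory of a triangulated category C with split idempotents, and let A₀ →f₀ A₁ →f₁ A₂ →f₂ ΣA₀ be a distinguished triangle in C. If f̄₀ is a monomorphism in the quotient category C/X, then f₁ is X-epic, i.e. every morphism from an object of X to A₂ factors through f₁. -/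
open CategoryTheory CategoryTheory.Limits CategoryTheory.Pretriangulated

universe v u

variable {C : Type u} [Category.{v} C] [Preadditive C] [HasZeroObject C]
  [HasShift C ℤ] [∀ n : ℤ, (shiftFunctor C n).Additive] [Pretriangulated C]

/-!
Given `u : X' ⟶ A₂` with `X' ∈ X`, it suffices to show `u ≫ f₂ = 0`. Shifting `u ≫ f₂` back gives
`a : X'⟦-1⟧ ⟶ A₀` with `a ≫ f₀ = 0`, so `ā ≫ f̄₀ = 0` and, `f̄₀` being monic, `a` factors through
some `X₀ ∈ X`. Shifting forward again, `u ≫ f₂` then factors through `X' ⟶ X₀⟦1⟧`, which vanishes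
by rigidity of `X`.
-/

lemma congruence_homRelOf {X : C → Prop} (hX : IsAdditiveClosed X) :
    Congruence (homRelOf X) where
  equivalence := by
    intro A B
    constructor
    · intro f
      obtain ⟨Z, hZ⟩ := HasZeroObject.zero (C := C)
      exact ⟨Z, 0, 0, hX.zero Z hZ, by simp⟩
    · rintro f g ⟨X₀, p, q, hX₀, hpq⟩
      exact ⟨X₀, -p, q, hX₀, by rw [Preadditive.neg_comp, hpq, neg_sub]⟩
    · rintro f g h ⟨X₁, p₁, q₁, hX₁, hpq₁⟩ ⟨X₂, p₂, q₂, hX₂, hpq₂⟩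
      refine ⟨X₁ ⊞ X₂, biprod.lift p₁ p₂, biprod.desc q₁ q₂,
        hX.biprod (BinaryBiproduct.bicone X₁ X₂) ⟨BinaryBiproduct.isBilimit X₁ X₂⟩ hX₁ hX₂, ?_⟩
      rw [biprod.lift_desc, hpq₁, hpq₂]
      abel
  comp_left := by
    rintro A B Z f g g' ⟨X₀, p, q, hX₀, hpq⟩
    exact ⟨X₀, f ≫ p, q, hX₀, by rw [Category.assoc, hpq, Preadditive.comp_sub]⟩
  comp_right := by
    rintro A B Z f f' g ⟨X₀, p, q, hX₀, hpq⟩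
    exact ⟨X₀, p, q ≫ g, hX₀, by rw [← Category.assoc, hpq, Preadditive.sub_comp]⟩

lemma factorsThru_of_comp_eq_zero {X : C → Prop} (hX : IsAdditiveClosed X) {A B D : C}
    {f : A ⟶ B} [Mono ((quotFunctor X).map f)] {a : D ⟶ A} (ha : a ≫ f = 0) :
    FactorsThru X a := by
  have := congruence_homRelOf hX
  have hq : (quotFunctor X).map a = (quotFunctor X).map 0 := by
    rw [← cancel_mono ((quotFunctor X).map f), ← Functor.map_comp, ← Functor.map_comp, ha,
      zero_comp]
  simpa [homRelOf] using (Quotient.functor_map_eq_iff _ _ _).1 hq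

omit [HasZeroObject C] [∀ n : ℤ, (shiftFunctor C n).Additive] [Pretriangulated C] in
lemma comp_shift_map_eq_zero_of_factorsThru {X : C → Prop}
    (hX : ∀ {X₁ X₂ : C}, X X₁ → X X₂ → ∀ f : X₁ ⟶ X₂⟦(1 : ℤ)⟧, f = 0)
    {X' A B : C} (hX' : X X') (w : X' ⟶ A⟦(1 : ℤ)⟧) {g : A ⟶ B} (hg : FactorsThru X g) :
    w ≫ g⟦(1 : ℤ)⟧' = 0 := by
  obtain ⟨X₀, p, q, hX₀, rfl⟩ := hg
  rw [Functor.map_comp, ← Category.assoc, hX hX' hX₀ (w ≫ p⟦(1 : ℤ)⟧'), zero_comp]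

theorem xepic_of_mono_general
    (X : C → Prop) (hX : IsClusterTilting X)
    {A₀ A₁ A₂ : C} (f₀ : A₀ ⟶ A₁) (f₁ : A₁ ⟶ A₂) (f₂ : A₂ ⟶ A₀⟦(1 : ℤ)⟧)
    (hT : Triangle.mk f₀ f₁ f₂ ∈ distTriang C)
    (hmono : Mono ((quotFunctor X).map f₀)) :
    XEpic X f₁ := by
  intro X' hX' u
  let adj : shiftFunctor C (-1 : ℤ) ⊣ shiftFunctor C (1 : ℤ) :=
    (shiftEquiv C (1 : ℤ)).symm.toAdjunction
  set a := (adj.homEquiv _ _).symm (u ≫ f₂)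
  have hf : f₂ ≫ f₀⟦(1 : ℤ)⟧' = 0 := comp_distTriang_mor_zero₃₁ _ hT
  have ha : a ≫ f₀ = 0 := by
    rw [← Adjunction.homEquiv_naturality_right_symm, Category.assoc, hf, comp_zero,
      Adjunction.homEquiv_counit, Functor.map_zero, zero_comp]
  have hu : u ≫ f₂ = 0 := by
    rw [← (adj.homEquiv _ _).apply_symm_apply (u ≫ f₂), Adjunction.homEquiv_unit]
    exact comp_shift_map_eq_zero_of_factorsThru hX.hom_shift_zero hX' _
      (factorsThru_of_comp_eq_zero hX.toIsAdditiveClosed ha)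
  obtain ⟨v, hv⟩ := Triangle.coyoneda_exact₃ _ hT u hu
  exact ⟨v, hv.symm⟩

/-- For a distinguished triangle `A₀ ⟶ A₁ ⟶ A₂ ⟶ ΣA₀` over a cluster-tilting
subcategory `X`, if `f̄₀` is a monomorphism in `C/X` then `f₁` is `X`-epic. -/
theorem xepic_of_mono [IsIdempotentComplete C]
    (X : C → Prop) (hX : IsClusterTilting X)
    {A₀ A₁ A₂ : C} (f₀ : A₀ ⟶ A₁) (f₁ : A₁ ⟶ A₂) (f₂ : A₂ ⟶ A₀⟦(1 : ℤ)⟧)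
    (hT : Triangle.mk f₀ f₁ f₂ ∈ distTriang C)
    (hmono : Mono ((quotFunctor X).map f₀)) :
    XEpic X f₁ :=
  xepic_of_mono_general X hX f₀ f₁ f₂ hT hmono
end
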